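/- arXiv:0903.1097 — 2 statements merged into one kernel-verified Lean document; each statement's English description precedes it below -/
import Mathlib

section
/- Uniqueness of closures of minimal limit sets: Let K be a valued field, X ⊆ K^n × K^m, and a ∈ K^n. Say L ⊆ K^m is a limit set of X at a if for every ε ∈ Γ there is δ ∈ Γ such that whenever c ∈ o(a, δ) ∩ (π(X) ∖ {a}) (π the projection to K^n), the fiber {b : (c,b) ∈ X} is contained in ∪_{b ∈ L'} o(b, ε) for some subset L' ⊆ L. A limit set L is minimal if no proper subset of L is a limit set of X at a. If L₁ and L₂ are both minimal limit sets of X at a, then their topological closures (in the valuation topology on K^m) coincide. -/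
/-- The open polyball around `c` of radius `ε` in `K^m`. -/
def polyball {K Γ : Type*} [Field K] [AddCommGroup Γ] [LinearOrder Γ] [IsOrderedAddMonoid Γ]
    (v : K → WithTop Γ) {m : ℕ} (c : Fin m → K) (ε : Γ) : Set (Fin m → K) :=
  {y | ∀ j, (ε : WithTop Γ) < v (y j - c j)}

/-- The valuation topology on `K^m`, generated by the open polyballs. -/
def valTopology {K Γ : Type*} [Field K] [AddCommGroup Γ] [LinearOrder Γ] [IsOrderedAddMonoid Γ]
    (v : K → WithTop Γ) (m : ℕ) : TopologicalSpace (Fin m → K) :=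
  TopologicalSpace.generateFrom {S | ∃ c ε, S = polyball v c ε}

/-- `L ⊆ K^m` is a limit set of `X ⊆ K^n × K^m` at `a ∈ K^n`: for every
`ε ∈ Γ` there is `δ ∈ Γ` such that whenever `c ∈ o(a, δ) ∩ (π(X) ∖ {a})`,
the fiber of `X` over `c` is contained in `⋃_{b ∈ L'} o(b, ε)` for some
`L' ⊆ L`. -/
def IsLimitSet {K Γ : Type*} [Field K] [AddCommGroup Γ] [LinearOrder Γ] [IsOrderedAddMonoid Γ]
    (v : K → WithTop Γ) {n m : ℕ}
    (X : Set ((Fin n → K) × (Fin m → K))) (a : Fin n → K)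
    (L : Set (Fin m → K)) : Prop :=
  ∀ ε : Γ, ∃ δ : Γ, ∀ c : Fin n → K,
    c ∈ polyball v a δ → c ≠ a → c ∈ Prod.fst '' X →
      ∃ L' ⊆ L, {b | (c, b) ∈ X} ⊆ ⋃ d ∈ L', polyball v d ε

/-!
If `b ∈ L₁` had a polyball `o(b, ε₀)` missing `L₂`, then `L₁ ∖ {b}` would still be a limit set:
at any radius `ε ≥ ε₀`, a fiber point covered by the ball around `b` is also covered by a ball
around some `d ∈ L₂`, and by the ultrametric inequality `d` would lie in `o(b, ε₀)`. So every point
of a minimal limit set lies in the closure of every limit set, and two minimal ones have the same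
closure.
-/

open Topology

section Polyball

variable {K Γ : Type*} [Field K] [AddCommGroup Γ] [LinearOrder Γ] [IsOrderedAddMonoid Γ]
  (v : K → WithTop Γ) {m : ℕ}

lemma polyball_mono {b : Fin m → K} {ε ε' : Γ} (h : ε ≤ ε') :
    polyball v b ε' ⊆ polyball v b ε :=
  fun _ hy j => (WithTop.coe_le_coe.mpr h).trans_lt (hy j)

lemma polyball_subset_of_mem (hadd : ∀ x y : K, min (v x) (v y) ≤ v (x + y))
    {b c : Fin m → K} {ε : Γ} (hb : b ∈ polyball v c ε) :
    polyball v b ε ⊆ polyball v c ε := by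
  intro y hy j
  calc (ε : WithTop Γ) < min (v (y j - b j)) (v (b j - c j)) := lt_min (hy j) (hb j)
    _ ≤ v ((y j - b j) + (b j - c j)) := hadd _ _
    _ = v (y j - c j) := by rw [sub_add_sub_cancel]

lemma mem_polyball_comm (hneg : ∀ x : K, v (-x) = v x) {b c : Fin m → K} {ε : Γ} :
    b ∈ polyball v c ε ↔ c ∈ polyball v b ε := by
  simp only [polyball, Set.mem_ofPred_eq, ← neg_sub (b _), hneg]

lemma exists_polyball_subset_of_isOpen (hadd : ∀ x y : K, min (v x) (v y) ≤ v (x + y))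
    {U : Set (Fin m → K)} (hU : IsOpen[valTopology v m] U) {b : Fin m → K} (hb : b ∈ U) :
    ∃ ε : Γ, polyball v b ε ⊆ U := by
  induction hU with
  | basic S hS =>
    obtain ⟨c, ε, rfl⟩ := hS
    exact ⟨ε, polyball_subset_of_mem v hadd hb⟩
  | univ => exact ⟨0, Set.subset_univ _⟩
  | inter U V _ _ ihU ihV =>
    obtain ⟨ε₁, h₁⟩ := ihU hb.1
    obtain ⟨ε₂, h₂⟩ := ihV hb.2
    exact ⟨max ε₁ ε₂, Set.subset_inter ((polyball_mono v (le_max_left _ _)).trans h₁)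
      ((polyball_mono v (le_max_right _ _)).trans h₂)⟩
  | sUnion S _ ih =>
    obtain ⟨U, hUS, hbU⟩ := hb
    obtain ⟨ε, hε⟩ := ih U hUS hbU
    exact ⟨ε, hε.trans (Set.subset_sUnion_of_mem hUS)⟩

lemma exists_polyball_disjoint_of_notMem_closure
    (hadd : ∀ x y : K, min (v x) (v y) ≤ v (x + y))
    {L : Set (Fin m → K)} {b : Fin m → K} (hb : b ∉ @closure _ (valTopology v m) L) :
    ∃ ε : Γ, Disjoint (polyball v b ε) L := by
  let := valTopology v m
  obtain ⟨U, hU, hbU, hUL⟩ : ∃ U, IsOpen U ∧ b ∈ U ∧ Disjoint U L := by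
    simpa [mem_closure_iff, Set.not_nonempty_iff_eq_empty, Set.disjoint_iff_inter_eq_empty] using hb
  obtain ⟨ε, hε⟩ := exists_polyball_subset_of_isOpen v hadd hU hbU
  exact ⟨ε, hUL.mono_left hε⟩

end Polyball

section LimitSet

variable {K Γ : Type*} [Field K] [AddCommGroup Γ] [LinearOrder Γ] [IsOrderedAddMonoid Γ]
  {v : K → WithTop Γ} {n m : ℕ} {X : Set ((Fin n → K) × (Fin m → K))} {a : Fin n → K}

lemma IsLimitSet.diff_singleton_of_disjoint
    (hadd : ∀ x y : K, min (v x) (v y) ≤ v (x + y)) (hneg : ∀ x : K, v (-x) = v x)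
    {L₁ L₂ : Set (Fin m → K)} (h₁ : IsLimitSet v X a L₁) (h₂ : IsLimitSet v X a L₂)
    {b : Fin m → K} {ε₀ : Γ} (hb : Disjoint (polyball v b ε₀) L₂) :
    IsLimitSet v X a (L₁ \ {b}) := by
  intro ε
  obtain ⟨δ₁, hδ₁⟩ := h₁ (max ε ε₀)
  obtain ⟨δ₂, hδ₂⟩ := h₂ (max ε ε₀)
  refine ⟨max δ₁ δ₂, fun c hc hca hcX => ?_⟩
  obtain ⟨L₁', hL₁', hcov₁⟩ := hδ₁ c (polyball_mono v (le_max_left _ _) hc) hca hcX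
  obtain ⟨L₂', hL₂', hcov₂⟩ := hδ₂ c (polyball_mono v (le_max_right _ _) hc) hca hcX
  refine ⟨L₁' \ {b}, Set.sdiff_subset_sdiff_left hL₁', fun x hx => ?_⟩
  obtain ⟨d, hd, hxd⟩ := Set.mem_iUnion₂.mp (hcov₁ hx)
  obtain ⟨d', hd', hxd'⟩ := Set.mem_iUnion₂.mp (hcov₂ hx)
  have hdb : d ≠ b := by
    rintro rfl
    have hd'x : d' ∈ polyball v x ε₀ :=
      (mem_polyball_comm v hneg).mp (polyball_mono v (le_max_right _ _) hxd')
    have hd'd : d' ∈ polyball v d ε₀ :=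
      polyball_subset_of_mem v hadd (polyball_mono v (le_max_right _ _) hxd) hd'x
    exact hb.ne_of_mem hd'd (hL₂' hd') rfl
  exact Set.mem_iUnion₂.mpr ⟨d, ⟨hd, hdb⟩, polyball_mono v (le_max_left _ _) hxd⟩

lemma IsLimitSet.subset_closure_of_minimal
    (hadd : ∀ x y : K, min (v x) (v y) ≤ v (x + y)) (hneg : ∀ x : K, v (-x) = v x)
    {L₁ L₂ : Set (Fin m → K)} (h₁ : IsLimitSet v X a L₁)
    (h₁min : ∀ L' ⊂ L₁, ¬ IsLimitSet v X a L') (h₂ : IsLimitSet v X a L₂) :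
    L₁ ⊆ @closure _ (valTopology v m) L₂ := by
  intro b hb
  by_contra hb₂
  obtain ⟨ε₀, hε₀⟩ := exists_polyball_disjoint_of_notMem_closure v hadd hb₂
  exact h₁min _ (Set.sdiff_singleton_ssubset.mpr hb) (h₁.diff_singleton_of_disjoint hadd hneg h₂ hε₀)

end LimitSet

/-- if `L₁` and `L₂` are both minimal limit sets of `X` at `a`,
then their topological closures in the valuation topology coincide. -/
theorem minimal_limit_sets_closure_eq
    {K Γ : Type*} [Field K] [AddCommGroup Γ] [LinearOrder Γ] [IsOrderedAddMonoid Γ]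
    (v : K → WithTop Γ)
    (hadd : ∀ x y : K, min (v x) (v y) ≤ v (x + y))
    (hneg : ∀ x : K, v (-x) = v x)
    {n m : ℕ} (X : Set ((Fin n → K) × (Fin m → K))) (a : Fin n → K)
    (L₁ L₂ : Set (Fin m → K))
    (h₁ : IsLimitSet v X a L₁) (h₁min : ∀ L' ⊂ L₁, ¬ IsLimitSet v X a L')
    (h₂ : IsLimitSet v X a L₂) (h₂min : ∀ L' ⊂ L₂, ¬ IsLimitSet v X a L') :
    @closure _ (valTopology v m) L₁ = @closure _ (valTopology v m) L₂ := by
  let := valTopology v m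
  exact subset_antisymm
    (closure_minimal (h₁.subset_closure_of_minimal hadd hneg h₁min h₂) isClosed_closure)
    (closure_minimal (h₂.subset_closure_of_minimal hadd hneg h₂min h₁) isClosed_closure)
end

section
/- Non-isolated points can be removed from limit sets: Let K be a valued field, X ⊆ K^n × K^m with projection Z to K^n, a ∈ K^n, and L ⊆ K^m a limit set of X at a. If b ∈ L is not isolated in L (with respect to the valuation topology), then L ∖ {b} is also a limit set of X at a. -/
/-
Since the valuation is ultrametric, every point of an open polyball is a centre of it. So a
polyball of radius `ε` around `b` is also the polyball of radius `ε` around some `y ∈ L ∖ {b}`,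
and any cover of a fibre by polyballs centred in `L` can be recentred into `L ∖ {b}`.
-/

theorem lt_valuation_sub_of_lt_of_lt {K α : Type*} [AddCommGroup K] [LinearOrder α]
    {v : K → α} (hadd : ∀ x y : K, min (v x) (v y) ≤ v (x + y))
    (hneg : ∀ x : K, v (-x) = v x) {ε : α} {x y z : K}
    (hx : ε < v (x - z)) (hy : ε < v (y - z)) : ε < v (x - y) :=
  calc ε < min (v (x - z)) (v (z - y)) := lt_min hx (by rwa [← neg_sub, hneg])
    _ ≤ v (x - z + (z - y)) := hadd _ _
    _ = v (x - y) := by rw [sub_add_sub_cancel]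

theorem polyball_subset_polyball_of_mem {K Γ : Type*} [Field K] [AddCommGroup Γ]
    [LinearOrder Γ] [IsOrderedAddMonoid Γ] {v : K → WithTop Γ}
    (hadd : ∀ x y : K, min (v x) (v y) ≤ v (x + y))
    (hneg : ∀ x : K, v (-x) = v x) {m : ℕ} {b y : Fin m → K} {ε : Γ}
    (hy : y ∈ polyball v b ε) : polyball v b ε ⊆ polyball v y ε :=
  fun _ hz j => lt_valuation_sub_of_lt_of_lt hadd hneg (hz j) (hy j)

theorem IsLimitSet.of_forall_polyball_subset {K Γ : Type*} [Field K] [AddCommGroup Γ]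
    [LinearOrder Γ] [IsOrderedAddMonoid Γ] {v : K → WithTop Γ} {n m : ℕ}
    {X : Set ((Fin n → K) × (Fin m → K))} {a : Fin n → K} {L M : Set (Fin m → K)}
    (hL : IsLimitSet v X a L)
    (hLM : ∀ ε : Γ, ∀ d ∈ L, ∃ d' ∈ M, polyball v d ε ⊆ polyball v d' ε) :
    IsLimitSet v X a M := by
  intro ε
  obtain ⟨δ, hδ⟩ := hL ε
  refine ⟨δ, fun c hc hca hcX => ⟨M, subset_rfl, fun z hz => ?_⟩⟩
  obtain ⟨L', hL'L, hcov⟩ := hδ c hc hca hcX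
  obtain ⟨d, hd, hzd⟩ := Set.mem_iUnion₂.mp (hcov hz)
  obtain ⟨d', hd', hdd'⟩ := hLM ε d (hL'L hd)
  exact Set.mem_iUnion₂.mpr ⟨d', hd', hdd' hzd⟩

theorem limit_set_remove_nonisolated_general
    {K Γ : Type*} [Field K] [AddCommGroup Γ] [LinearOrder Γ] [IsOrderedAddMonoid Γ]
    (v : K → WithTop Γ)
    (hadd : ∀ x y : K, min (v x) (v y) ≤ v (x + y))
    (hneg : ∀ x : K, v (-x) = v x)
    {n m : ℕ} (X : Set ((Fin n → K) × (Fin m → K))) (a : Fin n → K)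
    (L : Set (Fin m → K)) (b : Fin m → K)
    (hL : IsLimitSet v X a L)
    (hniso : ∀ ε : Γ, ∃ y ∈ L, y ≠ b ∧ y ∈ polyball v b ε) :
    IsLimitSet v X a (L \ {b}) := by
  refine hL.of_forall_polyball_subset fun ε d hd => ?_
  by_cases hdb : d = b
  · obtain ⟨y, hyL, hyb, hy⟩ := hniso ε
    exact ⟨y, ⟨hyL, hyb⟩, hdb ▸ polyball_subset_polyball_of_mem hadd hneg hy⟩
  · exact ⟨d, ⟨hd, hdb⟩, subset_rfl⟩

/-- if `b ∈ L` is not isolated in the limit set `L` of `X` at `a`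
(every polyball around `b` meets `L` in a point other than `b`), then
`L ∖ {b}` is also a limit set of `X` at `a`. -/
theorem limit_set_remove_nonisolated
    {K Γ : Type*} [Field K] [AddCommGroup Γ] [LinearOrder Γ] [IsOrderedAddMonoid Γ]
    (v : K → WithTop Γ)
    (hadd : ∀ x y : K, min (v x) (v y) ≤ v (x + y))
    (hneg : ∀ x : K, v (-x) = v x)
    {n m : ℕ} (X : Set ((Fin n → K) × (Fin m → K))) (a : Fin n → K)
    (L : Set (Fin m → K)) (b : Fin m → K) (hb : b ∈ L)
    (hL : IsLimitSet v X a L)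
    (hniso : ∀ ε : Γ, ∃ y ∈ L, y ≠ b ∧ y ∈ polyball v b ε) :
    IsLimitSet v X a (L \ {b}) :=
  limit_set_remove_nonisolated_general v hadd hneg X a L b hL hniso
end
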